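/- With notation as above (α_t orthogonal to v), a class w with r(w) > 0 satisfies ⟨w, α_t⟩ ≤ 0 for all sufficiently large t if and only if either c₁(w)·H/r(w) < c₁(v)·H/r(v), or both c₁(w)·H/r(w) = c₁(v)·H/r(v) and χ(w⊗L)/r(w) ≤ χ(v⊗L)/r(v). -/

import Mathlib

noncomputable section

/-- Poincaré pairing on the extended Néron–Severi group `ℝ ⊕ N ⊕ ℝ`. -/
def ppair {N : Type*} [AddCommGroup N] [Module ℝ N]
    (B : N →ₗ[ℝ] N →ₗ[ℝ] ℝ) (u v : ℝ × N × ℝ) : ℝ :=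
  u.1 * v.2.2 + B u.2.1 v.2.1 + u.2.2 * v.1

/-- Riemann–Roch Euler characteristic of a class `(r, c, e)`. -/
def chiRR {N : Type*} [AddCommGroup N] [Module ℝ N]
    (B : N →ₗ[ℝ] N →ₗ[ℝ] ℝ) (K : N) (χ0 : ℝ) (w : ℝ × N × ℝ) : ℝ :=
  w.2.2 - B w.2.1 K / 2 + w.1 * χ0

/-- Formal `L`-twisted Euler characteristic `χ(w⊗L)`. -/
def chiL {N : Type*} [AddCommGroup N] [Module ℝ N]
    (B : N →ₗ[ℝ] N →ₗ[ℝ] ℝ) (K L : N) (χ0 : ℝ) (w : ℝ × N × ℝ) : ℝ :=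
  w.2.2 + B w.2.1 L + w.1 * B L L / 2 - B (w.2.1 + w.1 • L) K / 2 + w.1 * χ0

/-- The class `α_t = (1, -K/2 + L + tH, d_t)` orthogonal to `v`. -/
def alphaT {N : Type*} [AddCommGroup N] [Module ℝ N]
    (B : N →ₗ[ℝ] N →ₗ[ℝ] ℝ) (K L H : N) (χ0 : ℝ) (v : ℝ × N × ℝ) (t : ℝ) :
    ℝ × N × ℝ :=
  (1, -((1:ℝ)/2) • K + L + t • H,
    -chiRR B K χ0 v / v.1 - B v.2.1 (L + t • H) / v.1 + χ0)

/-!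
The pairing `⟨w, α_t⟩` is affine in `t`: it equals `r(w)` times
`(μ_H(w) - μ_H(v)) t + (χ(w⊗L)/r(w) - χ(v⊗L)/r(v))`. An affine function of `t` is eventually
nonpositive iff its slope is negative, or its slope vanishes and its constant term is nonpositive.
-/

open Filter

lemma eventually_linear_nonpos_iff (a c : ℝ) :
    (∀ᶠ t in atTop, a * t + c ≤ 0) ↔ a < 0 ∨ (a = 0 ∧ c ≤ 0) := by
  rcases lt_trichotomy a 0 with ha | rfl | ha
  · have hbot : Tendsto (fun t => a * t + c) atTop atBot :=
      tendsto_atBot_add_const_right _ c (tendsto_id.const_mul_atTop_of_neg ha)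
    simp only [hbot.eventually_le_atBot 0, ha, true_or]
  · simp only [zero_mul, zero_add, eventually_const, lt_irrefl, true_and, false_or]
  · have htop : Tendsto (fun t => a * t + c) atTop atTop :=
      tendsto_atTop_add_const_right _ c (tendsto_id.const_mul_atTop ha)
    refine iff_of_false (fun hle => ?_) (by rintro (h | ⟨h, -⟩) <;> linarith)
    obtain ⟨t, hle, hgt⟩ := (hle.and (htop.eventually_gt_atTop 0)).exists
    exact hle.not_gt hgt

lemma ppair_alphaT {N : Type*} [AddCommGroup N] [Module ℝ N] (B : N →ₗ[ℝ] N →ₗ[ℝ] ℝ)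
    (K L H : N) (χ0 : ℝ) {v w : ℝ × N × ℝ} (hv : v.1 ≠ 0) (hw : w.1 ≠ 0) (t : ℝ) :
    ppair B w (alphaT B K L H χ0 v t) =
      w.1 * ((B w.2.1 H / w.1 - B v.2.1 H / v.1) * t +
        (chiL B K L χ0 w / w.1 - chiL B K L χ0 v / v.1)) := by
  simp only [ppair, alphaT, chiRR, chiL, map_add, map_smul, LinearMap.add_apply,
    LinearMap.smul_apply, smul_eq_mul]
  field_simp
  ring

theorem stmt2_general {N : Type*} [AddCommGroup N] [Module ℝ N]
    (B : N →ₗ[ℝ] N →ₗ[ℝ] ℝ)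
    (K L H : N) (χ0 : ℝ) (v w : ℝ × N × ℝ) (hv : 0 < v.1) (hw : 0 < w.1) :
    (∃ t0 : ℝ, ∀ t : ℝ, t0 ≤ t → ppair B w (alphaT B K L H χ0 v t) ≤ 0) ↔
      (B w.2.1 H / w.1 < B v.2.1 H / v.1 ∨
        (B w.2.1 H / w.1 = B v.2.1 H / v.1 ∧
          chiL B K L χ0 w / w.1 ≤ chiL B K L χ0 v / v.1)) := by
  simp only [← eventually_atTop, ppair_alphaT B K L H χ0 hv.ne' hw.ne',
    mul_nonpos_iff_pos_imp_nonpos, hw, hw.le, true_imp_iff, imp_true_iff, and_true,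
    eventually_linear_nonpos_iff, sub_neg, sub_eq_zero, sub_nonpos]

/-- A class `w` with `r(w) > 0` satisfies `⟨w, α_t⟩ ≤ 0` for all
sufficiently large `t` iff either `μ_H(w) < μ_H(v)`, or the `H`-slopes are equal and
`χ(w⊗L)/r(w) ≤ χ(v⊗L)/r(v)` (the `L`-twisted `H`-Gieseker condition). -/
theorem stmt2 {N : Type*} [AddCommGroup N] [Module ℝ N]
    (B : N →ₗ[ℝ] N →ₗ[ℝ] ℝ) (hsym : ∀ x y, B x y = B y x)
    (K L H : N) (χ0 : ℝ) (v w : ℝ × N × ℝ) (hv : 0 < v.1) (hw : 0 < w.1) :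
    (∃ t0 : ℝ, ∀ t : ℝ, t0 ≤ t → ppair B w (alphaT B K L H χ0 v t) ≤ 0) ↔
      (B w.2.1 H / w.1 < B v.2.1 H / v.1 ∨
        (B w.2.1 H / w.1 = B v.2.1 H / v.1 ∧
          chiL B K L χ0 w / w.1 ≤ chiL B K L χ0 v / v.1)) :=
  stmt2_general B K L H χ0 v w hv hw
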